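/- arXiv:1911.06936 — 10 statements merged into one kernel-verified Lean document; each statement's English description precedes it below -/
import Mathlib

section
/- Let ⟨X, ≤, ≤*⟩ be a coarsened poset such that EP(P) holds. Fix p ∈ X, an ordinal κ, and a sequence ⟨C_α : α < κ⟩ of subsets of X, each of which is invariant and Ramsey below p. Then there exists q ≤ p such that for every α < κ, either [q]* ⊆ C_α or [q]* ∩ C_α = ∅. (Proposition 4.13 of the paper.) -/
/-- `eqs les a b` means `a =* b`, i.e. `a ≤* b` and `b ≤* a`. -/
def eqs {X : Type*} (les : X → X → Prop) (a b : X) : Prop := les a b ∧ les b a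

/-- A coarsened poset: `les` (read `≤*`) is a preorder coarsening the partial order `≤`,
and every `y ≤* x` has a `≤`-refinement `z ≤ x` with `z =* y`. -/
def IsCoarsenedPoset {X : Type*} [PartialOrder X] (les : X → X → Prop) : Prop :=
  (∀ x, les x x) ∧ (∀ x y z, les x y → les y z → les x z) ∧
  (∀ x y : X, x ≤ y → les x y) ∧
  (∀ x y : X, les y x → ∃ z, z ≤ x ∧ eqs les z y)

/-- `[x] = {y : y ≤ x}`. -/
def cube {X : Type*} [PartialOrder X] (x : X) : Set X := {y | y ≤ x}

/-- `[x]* = {y : y ≤* x}`. -/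
def cubeStar {X : Type*} (les : X → X → Prop) (x : X) : Set X := {y | les y x}

/-- A set is invariant iff membership only depends on the `=*`-class. -/
def Invariant {X : Type*} (les : X → X → Prop) (S : Set X) : Prop :=
  ∀ p q : X, eqs les p q → (p ∈ S ↔ q ∈ S)

/-- A set is invariant below `p`. -/
def InvariantBelow {X : Type*} [PartialOrder X] (les : X → X → Prop) (p : X) (S : Set X) :
    Prop :=
  ∀ q₁ q₂ : X, q₁ ≤ p → q₂ ≤ p → eqs les q₁ q₂ → (q₁ ∈ S ↔ q₂ ∈ S)

/-- `S⁺_p = {q ≤ p : [q] ⊆ S}`. -/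
def Splus {X : Type*} [PartialOrder X] (S : Set X) (p : X) : Set X :=
  {q | q ≤ p ∧ cube q ⊆ S}

/-- `S⁻_p = {q ≤ p : [q] ∩ S = ∅}`. -/
def Sminus {X : Type*} [PartialOrder X] (S : Set X) (p : X) : Set X :=
  {q | q ≤ p ∧ cube q ∩ S = ∅}

/-- `S` is Ramsey below `p` iff `S⁺_p ∪ S⁻_p` is `≤`-dense below `p`. -/
def RamseyBelow {X : Type*} [PartialOrder X] (S : Set X) (p : X) : Prop :=
  ∀ r ≤ p, ∃ s ≤ r, s ∈ Splus S p ∪ Sminus S p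

/-- `S` is R⁺ below `p` iff `S⁺_p` is `≤`-dense below `p`. -/
def RplusBelow {X : Type*} [PartialOrder X] (S : Set X) (p : X) : Prop :=
  ∀ r ≤ p, ∃ s ≤ r, s ∈ Splus S p

/-- `EP`: any well-ordered sequence of sets, each invariant and R⁺ below `p`, has
intersection invariant and R⁺ below `p`. -/
def EP {X : Type*} [PartialOrder X] (les : X → X → Prop) : Prop :=
  ∀ (p : X) (κ : Ordinal.{0}) (C : ∀ α : Ordinal.{0}, α < κ → Set X),
    (∀ (α : Ordinal.{0}) (h : α < κ), InvariantBelow les p (C α h) ∧ RplusBelow (C α h) p) →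
    InvariantBelow les p (⋂ (α : Ordinal.{0}) (h : α < κ), C α h) ∧
      RplusBelow (⋂ (α : Ordinal.{0}) (h : α < κ), C α h) p

/-- Proposition 4.13: in a coarsened poset satisfying EP, given a well-ordered sequence of
sets each invariant and Ramsey below `p`, there is `q ≤ p` deciding every set on `[q]*`. -/
theorem stmt0 {X : Type*} [PartialOrder X] (les : X → X → Prop)
    (hcp : IsCoarsenedPoset les) (hEP : EP les)
    (p : X) (κ : Ordinal.{0}) (C : ∀ α : Ordinal.{0}, α < κ → Set X)
    (hinv : ∀ (α : Ordinal.{0}) (h : α < κ), Invariant les (C α h))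
    (hram : ∀ (α : Ordinal.{0}) (h : α < κ), RamseyBelow (C α h) p) :
    ∃ q ≤ p, ∀ (α : Ordinal.{0}) (h : α < κ),
      cubeStar les q ⊆ C α h ∨ cubeStar les q ∩ C α h = ∅ := by
  obtain ⟨hrefl, htrans, hle, hrefine⟩ := hcp
  -- the decided sets
  set E : ∀ α : Ordinal.{0}, α < κ → Set X := fun α h =>
    {q | cube q ⊆ C α h ∨ cube q ∩ C α h = ∅} with hE
  have hEprop : ∀ (α : Ordinal.{0}) (h : α < κ),
      InvariantBelow les p (E α h) ∧ RplusBelow (E α h) p := by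
    intro α h
    constructor
    · intro q₁ q₂ _ _ heq
      have key : ∀ a b : X, eqs les a b → cube a ⊆ C α h → cube b ⊆ C α h := by
        intro a b hab hsub t ht
        obtain ⟨z, hz, hzt⟩ := hrefine a t (htrans t b a (hle t b ht) hab.2)
        exact ((hinv α h) z t hzt).mp (hsub hz)
      have key2 : ∀ a b : X, eqs les a b → cube a ∩ C α h = ∅ → cube b ∩ C α h = ∅ := by
        intro a b hab hdis
        rw [Set.eq_empty_iff_forall_notMem] at hdis ⊢
        intro t ⟨ht, htC⟩
        obtain ⟨z, hz, hzt⟩ := hrefine a t (htrans t b a (hle t b ht) hab.2)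
        exact hdis z ⟨hz, ((hinv α h) z t hzt).mpr htC⟩
      constructor
      · rintro (h1 | h1)
        · exact Or.inl (key q₁ q₂ heq h1)
        · exact Or.inr (key2 q₁ q₂ heq h1)
      · rintro (h1 | h1)
        · exact Or.inl (key q₂ q₁ ⟨heq.2, heq.1⟩ h1)
        · exact Or.inr (key2 q₂ q₁ ⟨heq.2, heq.1⟩ h1)
    · intro r hr
      obtain ⟨s, hs, hsmem⟩ := hram α h r hr
      refine ⟨s, hs, ?_⟩
      rcases hsmem with ⟨hsp, hsub⟩ | ⟨hsp, hdis⟩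
      · exact ⟨hsp, fun t ht => Or.inl (fun u hu => hsub (le_trans hu ht))⟩
      · refine ⟨hsp, fun t ht => Or.inr ?_⟩
        rw [Set.eq_empty_iff_forall_notMem] at hdis ⊢
        exact fun u ⟨hu, huC⟩ => hdis u ⟨le_trans hu ht, huC⟩
  obtain ⟨_, hRplus⟩ := hEP p κ E hEprop
  obtain ⟨q, _, hqp, hqsub⟩ := hRplus p le_rfl
  refine ⟨q, hqp, ?_⟩
  intro α h
  have hq : q ∈ E α h := by
    have := hqsub (le_refl q)
    simp only [Set.mem_iInter] at this
    exact this α h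
  rcases hq with hsub | hdis
  · refine Or.inl ?_
    intro y hy
    obtain ⟨z, hz, hzy⟩ := hrefine q y hy
    exact ((hinv α h) z y hzy).mp (hsub hz)
  · refine Or.inr ?_
    rw [Set.eq_empty_iff_forall_notMem] at hdis ⊢
    intro y ⟨hy, hyC⟩
    obtain ⟨z, hz, hzy⟩ := hrefine q y hy
    exact hdis z ⟨hz, ((hinv α h) z y hzy).mpr hyC⟩
end

section
/- Let (A, R, ≤, ≤*, ≤_fin) be a coarsened topological Ramsey space, and let ⟨Cₙ : n ∈ ℕ⟩ be a sequence of subsets of R, each of which is invariant and R⁺. Then ⋂ₙ Cₙ is invariant and R⁺. (Proposition 4.10 of the paper.) -/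
/-- The set `AR` of all finite approximations realized in `R` (in sequence form,
an approximation is a value `x n` for `x ∈ R`). -/
def ARset {A : Type*} (R : Set (ℕ → A)) : Set A :=
  {a | ∃ x ∈ R, ∃ n : ℕ, x n = a}

/-- `a ⊏ b`: `a` is a proper initial approximation of `b` along some member of `R`. -/
def sqsubA {A : Type*} (R : Set (ℕ → A)) (a b : A) : Prop :=
  ∃ z ∈ R, ∃ m n : ℕ, m < n ∧ z m = a ∧ z n = b

/-- The Ellentuck-style basic set `[a, x] = {y ∈ R : y ≤ x and y n = a for some n}`. -/
def approxSet {A : Type*} (R : Set (ℕ → A)) (le : (ℕ → A) → (ℕ → A) → Prop)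
    (a : A) (x : ℕ → A) : Set (ℕ → A) :=
  {y | y ∈ R ∧ le y x ∧ ∃ n : ℕ, y n = a}

/-- `depth_x(a) = n`: `n` is least with `a ≤_fin x n`. -/
def IsDepth {A : Type*} (lefin : A → A → Prop) (x : ℕ → A) (a : A) (n : ℕ) : Prop :=
  lefin a (x n) ∧ ∀ m < n, ¬ lefin a (x m)

/-- The set of one-step extensions of `a` realized inside `[a, y]`. -/
def extSet {A : Type*} (R : Set (ℕ → A)) (le : (ℕ → A) → (ℕ → A) → Prop)
    (a : A) (y : ℕ → A) : Set A :=
  {b | ∃ z ∈ approxSet R le a y, ∃ j : ℕ, z j = a ∧ z (j + 1) = b}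

/-- A coarsened (axiomatized, closed) topological Ramsey space, presented in sequence form:
`R ⊆ ℕ → A` is nonempty and closed, `le` (`≤`) and `lefin` (`≤_fin`) are preorders
satisfying Todorcevic's axioms A.1–A.4, and `les` (`≤*`) is a σ-closed coarsening of `le`
such that `∅ ≠ [a,q] ⊆ [a,p]` implies `q ≤* p`. -/
structure CoarsenedTRS (A : Type*) [TopologicalSpace A] [DiscreteTopology A] where
  R : Set (ℕ → A)
  nonempty : R.Nonempty
  closed : IsClosed R
  le : (ℕ → A) → (ℕ → A) → Prop
  le_refl : ∀ x ∈ R, le x x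
  le_trans : ∀ x y z, le x y → le y z → le x z
  lefin : A → A → Prop
  lefin_refl : ∀ a, lefin a a
  lefin_trans : ∀ a b c, lefin a b → lefin b c → lefin a c
  -- A.1 (1): all members of `R` have the same 0-th approximation
  a1_1 : ∃ e : A, ∀ x ∈ R, x 0 = e
  -- A.1 (3): approximations determine their length and all earlier approximations
  a1_3 : ∀ x ∈ R, ∀ y ∈ R, ∀ m n : ℕ, x m = y n → m = n ∧ ∀ k < n, x k = y k
  -- A.2 (1)
  a2_1 : ∀ a : A, {b : A | lefin b a}.Finite
  -- A.2 (2)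
  a2_2 : ∀ x ∈ R, ∀ y ∈ R, (le y x ↔ ∀ n : ℕ, ∃ m : ℕ, lefin (y n) (x m))
  -- A.2 (3)
  a2_3 : ∀ u ∈ ARset R, ∀ v ∈ ARset R, ∀ y ∈ ARset R,
    sqsubA R y v → lefin v u → ∃ w ∈ ARset R, sqsubA R w u ∧ lefin y w
  -- A.3 (1)
  a3_1 : ∀ x ∈ R, ∀ a ∈ ARset R, ∀ n : ℕ, IsDepth lefin x a n →
    ∀ y ∈ approxSet R le (x n) x, (approxSet R le a y).Nonempty
  -- A.3 (2)
  a3_2 : ∀ x ∈ R, ∀ y ∈ R, ∀ a ∈ ARset R, le y x → (approxSet R le a y).Nonempty →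
    ∀ n : ℕ, IsDepth lefin x a n →
      ∃ y' ∈ approxSet R le (x n) x,
        (approxSet R le a y').Nonempty ∧ approxSet R le a y' ⊆ approxSet R le a y
  -- A.4
  a4 : ∀ x ∈ R, ∀ a ∈ ARset R, ∀ n : ℕ, IsDepth lefin x a n → ∀ O : Set A,
    ∃ y ∈ approxSet R le (x n) x,
      extSet R le a y ⊆ O ∨ extSet R le a y ∩ O = ∅
  -- the coarsening `≤*`
  les : (ℕ → A) → (ℕ → A) → Prop
  les_refl : ∀ x ∈ R, les x x
  les_trans : ∀ x y z, les x y → les y z → les x z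
  -- `≤*` is σ-closed
  sigma_closed : ∀ f : ℕ → (ℕ → A), (∀ n, f n ∈ R) → (∀ n, les (f (n + 1)) (f n)) →
    ∃ z ∈ R, ∀ n, les z (f n)
  -- `≤` implies `≤*`
  les_of_le : ∀ x ∈ R, ∀ y ∈ R, le x y → les x y
  -- if `y ≤* x` then there is `z ≤ x` with `z =* y`
  coarsen : ∀ x ∈ R, ∀ y ∈ R, les y x → ∃ z ∈ R, le z x ∧ les z y ∧ les y z
  -- if `∅ ≠ [a,q] ⊆ [a,p]` then `q ≤* p`
  les_of_approx : ∀ p ∈ R, ∀ q ∈ R, ∀ a : A, (approxSet R le a q).Nonempty →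
    approxSet R le a q ⊆ approxSet R le a p → les q p

variable {A : Type*} [TopologicalSpace A] [DiscreteTopology A]

/-- `[q] = {y ∈ R : y ≤ q}`. -/
def cubeOf (S : CoarsenedTRS A) (q : ℕ → A) : Set (ℕ → A) :=
  {y | y ∈ S.R ∧ S.le y q}

/-- A set is invariant iff membership only depends on `=*`-classes. -/
def InvariantTRS (S : CoarsenedTRS A) (C : Set (ℕ → A)) : Prop :=
  ∀ q₁ ∈ S.R, ∀ q₂ ∈ S.R, S.les q₁ q₂ → S.les q₂ q₁ → (q₁ ∈ C ↔ q₂ ∈ C)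

/-- `C` is R⁺ iff `{q : [q] ⊆ C}` is `≤`-dense in `R`. -/
def RplusTRS (S : CoarsenedTRS A) (C : Set (ℕ → A)) : Prop :=
  ∀ p ∈ S.R, ∃ q ∈ S.R, S.le q p ∧ cubeOf S q ⊆ C

/-- Proposition 4.10: in a coarsened topological Ramsey space, the intersection of countably
many invariant R⁺ sets is invariant and R⁺. -/
theorem stmt2 [Countable A] (S : CoarsenedTRS A) (C : ℕ → Set (ℕ → A))
    (hsub : ∀ n, C n ⊆ S.R)
    (hinv : ∀ n, InvariantTRS S (C n)) (hplus : ∀ n, RplusTRS S (C n)) :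
    InvariantTRS S (⋂ n, C n) ∧ RplusTRS S (⋂ n, C n) := by
  constructor
  · intro q₁ h₁ q₂ h₂ h12 h21
    simp only [Set.mem_iInter]
    exact ⟨fun h n => (hinv n q₁ h₁ q₂ h₂ h12 h21).mp (h n),
           fun h n => (hinv n q₁ h₁ q₂ h₂ h12 h21).mpr (h n)⟩
  · intro p hp
    have step : ∀ n : ℕ, ∀ r, r ∈ S.R → ∃ q, q ∈ S.R ∧ S.le q r ∧ cubeOf S q ⊆ C n := by
      intro n r hr
      obtain ⟨q, hq, hle, hsub'⟩ := hplus n r hr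
      exact ⟨q, hq, hle, hsub'⟩
    choose g hg1 hg2 hg3 using step
    let F : ℕ → {q : ℕ → A // q ∈ S.R} := fun n =>
      Nat.rec ⟨g 0 p hp, hg1 0 p hp⟩ (fun k q => ⟨g (k+1) q.1 q.2, hg1 (k+1) q.1 q.2⟩) n
    have hFle : ∀ n, S.le (F (n+1)).1 (F n).1 := fun n => hg2 (n+1) (F n).1 (F n).2
    have hFC : ∀ n, cubeOf S (F n).1 ⊆ C n := by
      intro n
      cases n with
      | zero => exact hg3 0 p hp
      | succ k => exact hg3 (k+1) (F k).1 (F k).2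
    have hles : ∀ n, S.les (F (n+1)).1 (F n).1 := fun n =>
      S.les_of_le (F (n+1)).1 (F (n+1)).2 (F n).1 (F n).2 (hFle n)
    obtain ⟨z, hz, hzles⟩ := S.sigma_closed (fun n => (F n).1) (fun n => (F n).2) hles
    obtain ⟨z', hz', hz'le, hz'z, hzz'⟩ := S.coarsen (F 0).1 (F 0).2 z hz (hzles 0)
    refine ⟨z', hz', S.le_trans z' (F 0).1 p hz'le (hg2 0 p hp), ?_⟩
    intro y hy
    simp only [Set.mem_iInter]
    intro n
    have hyz' : S.les y z' := S.les_of_le y hy.1 z' hz' hy.2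
    have hyn : S.les y (F n).1 :=
      S.les_trans y z (F n).1 (S.les_trans y z' z hyz' hz'z) (hzles n)
    obtain ⟨w, hw, hwle, hwy, hyw⟩ := S.coarsen (F n).1 (F n).2 y hy.1 hyn
    exact (hinv n w hw y hy.1 hwy hyw).mp (hFC n ⟨hw, hwle⟩)
end

section
/- Let (A, R, ≤, ≤*, ≤_fin) be a coarsened topological Ramsey space, and let ⟨Cₙ : n ∈ ℕ⟩ be a sequence of subsets of R, each of which is invariant and R⁻. Then ⋃ₙ Cₙ is invariant and R⁻. (Corollary 4.11 of the paper.) -/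
variable {A : Type*} [TopologicalSpace A] [DiscreteTopology A]

/-- `C` is R⁻ iff `{q : [q] ∩ C = ∅}` is `≤`-dense in `R`. -/
def RminusTRS (S : CoarsenedTRS A) (C : Set (ℕ → A)) : Prop :=
  ∀ p ∈ S.R, ∃ q ∈ S.R, S.le q p ∧ cubeOf S q ∩ C = ∅

/-- Corollary 4.11: in a coarsened topological Ramsey space, the union of countably
many invariant R⁻ sets is invariant and R⁻. -/
theorem stmt3 [Countable A] (S : CoarsenedTRS A) (C : ℕ → Set (ℕ → A))
    (hsub : ∀ n, C n ⊆ S.R)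
    (hinv : ∀ n, InvariantTRS S (C n)) (hminus : ∀ n, RminusTRS S (C n)) :
    InvariantTRS S (⋃ n, C n) ∧ RminusTRS S (⋃ n, C n) := by
  constructor
  · intro q₁ h₁ q₂ h₂ h12 h21
    simp only [Set.mem_iUnion]
    constructor
    · rintro ⟨n, hn⟩; exact ⟨n, (hinv n q₁ h₁ q₂ h₂ h12 h21).mp hn⟩
    · rintro ⟨n, hn⟩; exact ⟨n, (hinv n q₁ h₁ q₂ h₂ h12 h21).mpr hn⟩
  · intro p hp
    -- choice function for the R⁻ property
    have step : ∀ (x : {x : ℕ → A // x ∈ S.R}) (n : ℕ),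
        ∃ q, q ∈ S.R ∧ S.le q x.1 ∧ cubeOf S q ∩ C n = ∅ := by
      intro x n
      obtain ⟨q, hqR, hql, hqe⟩ := hminus n x.1 x.2
      exact ⟨q, hqR, hql, hqe⟩
    choose F hFR hFle hFe using step
    -- build the fusion sequence
    let f : ℕ → {x : ℕ → A // x ∈ S.R} :=
      fun n => Nat.rec ⟨p, hp⟩ (fun n xn => ⟨F xn n, hFR xn n⟩) n
    have hf0 : (f 0).1 = p := rfl
    have hfsucc : ∀ n, (f (n + 1)).1 = F (f n) n := fun n => rfl
    have hles : ∀ n, S.les ((f (n + 1)).1) ((f n).1) := by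
      intro n
      exact S.les_of_le _ (f (n + 1)).2 _ (f n).2 (hFle (f n) n)
    obtain ⟨z, hzR, hz⟩ := S.sigma_closed (fun n => (f n).1) (fun n => (f n).2) hles
    obtain ⟨w, hwR, hwle, hwz, hzw⟩ := S.coarsen p hp z hzR (hz 0)
    refine ⟨w, hwR, hwle, ?_⟩
    ext y
    simp only [Set.mem_inter_iff, Set.mem_iUnion, Set.mem_empty_iff_false, iff_false,
      not_and, not_exists]
    rintro ⟨hyR, hyw⟩ n hyC
    have hyles : S.les y ((f (n + 1)).1) := by
      have h1 : S.les y w := S.les_of_le y hyR w hwR hyw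
      exact S.les_trans _ _ _ (S.les_trans _ _ _ h1 hwz) (hz (n + 1))
    obtain ⟨u, huR, hule, huy, hyu⟩ := S.coarsen _ (f (n + 1)).2 y hyR hyles
    have huC : u ∈ C n := (hinv n u huR y hyR huy hyu).mpr hyC
    have : u ∈ cubeOf S ((f (n + 1)).1) ∩ C n := ⟨⟨huR, hule⟩, huC⟩
    rw [hfsucc, hFe (f n) n] at this
    exact this
end

section
/- Let ⟨Cₙ : n ∈ ℕ⟩ be a sequence of subsets of [ω]^ω, each of which is invariant and R⁺. Then ⋂ₙ Cₙ is invariant and R⁺. (Proposition 4.10 of the paper, applied to the Ellentuck space ([ω]^ω, ⊆, ⊆*).) -/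
/-- `[q] = {r ∈ [ω]^ω : r ⊆ q}`: the cube of infinite subsets of `q`. -/
def EllCube (q : Set ℕ) : Set (Set ℕ) := {r | r.Infinite ∧ r ⊆ q}

/-- A family `S` of infinite subsets of `ℕ` is invariant iff membership depends only on the
almost-equality (finite symmetric difference) class. -/
def EllInvariant (S : Set (Set ℕ)) : Prop :=
  ∀ q q' : Set ℕ, q.Infinite → q'.Infinite → (symmDiff q q').Finite → (q ∈ S ↔ q' ∈ S)

/-- `S` is R⁺ iff `{q ∈ [ω]^ω : [q] ⊆ S}` is `⊆`-dense in `[ω]^ω`. -/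
def EllRplus (S : Set (Set ℕ)) : Prop :=
  ∀ p : Set ℕ, p.Infinite → ∃ q : Set ℕ, q.Infinite ∧ q ⊆ p ∧ EllCube q ⊆ S

/-- Proposition 4.10 for the Ellentuck space: the intersection of countably many
invariant R⁺ subsets of `[ω]^ω` is invariant and R⁺. -/
theorem stmt4 (C : ℕ → Set (Set ℕ))
    (hsub : ∀ n, ∀ q ∈ C n, (q : Set ℕ).Infinite)
    (hinv : ∀ n, EllInvariant (C n)) (hplus : ∀ n, EllRplus (C n)) :
    EllInvariant (⋂ n, C n) ∧ EllRplus (⋂ n, C n) := by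
  constructor
  · intro q q' hq hq' hfin
    simp only [Set.mem_iInter]
    exact ⟨fun h n => (hinv n q q' hq hq' hfin).mp (h n),
           fun h n => (hinv n q q' hq hq' hfin).mpr (h n)⟩
  · intro p hp
    choose f hfi hfs hfc using hplus
    -- fusion sequence Q
    let Q : ℕ → {s : Set ℕ // s.Infinite} := fun n =>
      Nat.rec (motive := fun _ => {s : Set ℕ // s.Infinite})
        ⟨f 0 p hp, hfi 0 p hp⟩
        (fun k ih => ⟨f (k+1) ih.1 ih.2, hfi (k+1) ih.1 ih.2⟩) n
    have hQsucc : ∀ k, (Q (k+1)).1 = f (k+1) (Q k).1 (Q k).2 := fun k => rfl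
    have hQsub : ∀ k, (Q (k+1)).1 ⊆ (Q k).1 := fun k => by
      rw [hQsucc]; exact hfs (k+1) (Q k).1 (Q k).2
    have hQcube : ∀ k, EllCube (Q k).1 ⊆ C k := by
      intro k
      cases k with
      | zero => exact hfc 0 p hp
      | succ k => rw [hQsucc]; exact hfc (k+1) (Q k).1 (Q k).2
    have hQp : ∀ k, (Q k).1 ⊆ p := by
      intro k
      induction k with
      | zero => exact hfs 0 p hp
      | succ k ih => exact (hQsub k).trans ih
    have hQanti : ∀ n m, n ≤ m → (Q m).1 ⊆ (Q n).1 := by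
      intro n m h
      induction h with
      | refl => exact fun x hx => hx
      | @step m' h ih => exact (hQsub m').trans ih
    -- diagonal sequence a
    have step : ∀ k (x : ℕ), ∃ y, y ∈ (Q (k+1)).1 ∧ x < y := by
      intro k x
      obtain ⟨y, hy, hxy⟩ := (Q (k+1)).2.exists_gt x
      exact ⟨y, hy, hxy⟩
    choose g hg1 hg2 using step
    obtain ⟨a0, ha0⟩ := (Q 0).2.nonempty
    let a : ℕ → ℕ := fun n =>
      Nat.rec (motive := fun _ => ℕ) a0 (fun k x => g k x) n
    have ha_mem : ∀ n, a n ∈ (Q n).1 := by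
      intro n
      cases n with
      | zero => exact ha0
      | succ k => exact hg1 k (a k)
    have ha_lt : ∀ n, a n < a (n+1) := fun n => hg2 n (a n)
    have hmono : StrictMono a := strictMono_nat_of_lt_succ ha_lt
    refine ⟨Set.range a, Set.infinite_range_of_injective hmono.injective, ?_, ?_⟩
    · rintro x ⟨n, rfl⟩; exact hQp n (ha_mem n)
    · rintro r ⟨hrinf, hrd⟩
      rw [Set.mem_iInter]
      intro n
      have hfin : (r \ (Q n).1).Finite := by
        apply Set.Finite.subset ((Set.finite_Iio n).image a)
        rintro x ⟨hxr, hxq⟩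
        obtain ⟨m, rfl⟩ := hrd hxr
        refine ⟨m, ?_, rfl⟩
        by_contra h
        exact hxq (hQanti n m (le_of_not_gt h) (ha_mem m))
      have heq : r ∩ (Q n).1 = r \ (r \ (Q n).1) := by
        ext x; simp only [Set.mem_inter_iff, Set.mem_diff]; tauto
      have hr'inf : (r ∩ (Q n).1).Infinite := by
        rw [heq]; exact hrinf.diff hfin
      have hsymm : (symmDiff r (r ∩ (Q n).1)).Finite := by
        have : symmDiff r (r ∩ (Q n).1) = r \ (Q n).1 := by
          ext x
          simp only [Set.mem_symmDiff, Set.mem_inter_iff, Set.mem_diff]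
          tauto
        rw [this]; exact hfin
      have hr' : r ∩ (Q n).1 ∈ C n :=
        hQcube n ⟨hr'inf, Set.inter_subset_right⟩
      exact (hinv n r (r ∩ (Q n).1) hrinf hr'inf hsymm).mpr hr'
end

section
/- Let ⟨Cₙ : n ∈ ℕ⟩ be a sequence of subsets of [ω]^ω, each of which is invariant and R⁻. Then ⋃ₙ Cₙ is invariant and R⁻. (Corollary 4.11 of the paper, applied to the Ellentuck space ([ω]^ω, ⊆, ⊆*).) -/
/-- `S` is R⁻ iff `{q ∈ [ω]^ω : [q] ∩ S = ∅}` is `⊆`-dense in `[ω]^ω`. -/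
def EllRminus (S : Set (Set ℕ)) : Prop :=
  ∀ p : Set ℕ, p.Infinite → ∃ q : Set ℕ, q.Infinite ∧ q ⊆ p ∧ EllCube q ∩ S = ∅

/-- Corollary 4.11 for the Ellentuck space: the union of countably many
invariant R⁻ subsets of `[ω]^ω` is invariant and R⁻. -/
theorem stmt5 (C : ℕ → Set (Set ℕ))
    (hsub : ∀ n, ∀ q ∈ C n, (q : Set ℕ).Infinite)
    (hinv : ∀ n, EllInvariant (C n)) (hminus : ∀ n, EllRminus (C n)) :
    EllInvariant (⋃ n, C n) ∧ EllRminus (⋃ n, C n) := by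
  constructor
  · intro q q' hq hq' hd
    simp only [Set.mem_iUnion]
    exact exists_congr fun n => hinv n q q' hq hq' hd
  · intro p hp
    -- A strengthened step: shrink while staying above the minimum of the previous set.
    have H : ∀ (n : ℕ) (s : Set ℕ), s.Infinite →
        ∃ q : Set ℕ, q.Infinite ∧ q ⊆ s ∧ EllCube q ∩ C n = ∅ ∧ ∀ x ∈ q, sInf s < x := by
      intro n s hs
      have hset : s \ Set.Iic (sInf s) = s ∩ Set.Ioi (sInf s) := by
        ext x
        simp [Set.mem_diff, Set.mem_Iic, Set.mem_Ioi, not_le, Set.mem_inter_iff]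
      have hs' : (s ∩ Set.Ioi (sInf s)).Infinite := by
        rw [← hset]; exact hs.diff (Set.finite_Iic _)
      obtain ⟨q, hq1, hq2, hq3⟩ := hminus n _ hs'
      exact ⟨q, hq1, fun x hx => (hq2 hx).1, hq3, fun x hx => (hq2 hx).2⟩
    choose! F hF1 hF2 hF3 hF4 using H
    set Q : ℕ → Set ℕ := fun n => Nat.rec (F 0 p) (fun n q => F (n + 1) q) n with hQ
    have hQs : ∀ n, Q (n + 1) = F (n + 1) (Q n) := fun n => rfl
    have hQinf : ∀ n, (Q n).Infinite := by
      intro n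
      induction n with
      | zero => exact hF1 0 p hp
      | succ n ih => rw [hQs]; exact hF1 _ _ ih
    have hQsub : ∀ n, Q (n + 1) ⊆ Q n := fun n => by
      rw [hQs]; exact hF2 _ _ (hQinf n)
    have hQp : ∀ n, Q n ⊆ p := by
      intro n
      induction n with
      | zero => exact hF2 0 p hp
      | succ n ih => exact (hQsub n).trans ih
    have hQanti : ∀ m n, m ≤ n → Q n ⊆ Q m := by
      intro m n hmn
      induction n with
      | zero => simp_all
      | succ n ih =>
        rcases Nat.lt_or_ge m (n + 1) with h | h
        · exact (hQsub n).trans (ih (Nat.lt_succ_iff.mp h))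
        · have : m = n + 1 := le_antisymm hmn h
          subst this; exact fun _ h => h
    have hcube : ∀ n, EllCube (Q n) ∩ C n = ∅ := by
      intro n
      cases n with
      | zero => exact hF3 0 p hp
      | succ n => rw [hQs]; exact hF3 _ _ (hQinf n)
    set a : ℕ → ℕ := fun n => sInf (Q n) with ha
    have amem : ∀ n, a n ∈ Q n := fun n => Nat.sInf_mem (hQinf n).nonempty
    have astep : ∀ n, a n < a (n + 1) := by
      intro n
      have h := amem (n + 1)
      rw [hQs] at h
      exact hF4 (n + 1) (Q n) (hQinf n) _ h
    have amono : StrictMono a := strictMono_nat_of_lt_succ astep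
    refine ⟨Set.range a, Set.infinite_range_of_injective amono.injective, ?_, ?_⟩
    · rintro _ ⟨n, rfl⟩; exact hQp n (amem n)
    · rw [Set.eq_empty_iff_forall_notMem]
      rintro r ⟨⟨hrinf, hrsub⟩, hrC⟩
      obtain ⟨n, hn⟩ := Set.mem_iUnion.mp hrC
      set r' : Set ℕ := r \ (a '' Set.Iio n) with hr'
      have hr'r : r' ⊆ r := Set.diff_subset
      have hr'inf : r'.Infinite := hrinf.diff ((Set.finite_Iio n).image a)
      have hr'sub : r' ⊆ Q n := by
        rintro x ⟨hx, hnx⟩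
        obtain ⟨k, rfl⟩ := hrsub hx
        have hk : n ≤ k := by
          by_contra h
          exact hnx ⟨k, Nat.lt_of_not_le h, rfl⟩
        exact hQanti n k hk (amem k)
      have hfin : (symmDiff r r').Finite := by
        apply ((Set.finite_Iio n).image a).subset
        intro x hx
        rw [Set.mem_symmDiff] at hx
        rcases hx with ⟨hxr, hxr'⟩ | ⟨hxr', hxr⟩
        · by_contra h
          exact hxr' ⟨hxr, h⟩
        · exact absurd (hr'r hxr') hxr
      have hrn' : r' ∈ C n := (hinv n r r' hrinf hr'inf hfin).mp hn
      exact Set.eq_empty_iff_forall_notMem.mp (hcube n) r' ⟨⟨hr'inf, hr'sub⟩, hrn'⟩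
end

section
/- Let X be a topological space equipped with a preorder ≤, and for q ∈ X give [q] = {x ∈ X : x ≤ q} the subspace topology. Suppose continuous uniformization holds for Cantor space targets: for every relation R ⊆ X × (ℕ → Bool) and every p ∈ X such that for all x ≤ p there exists y with R(x, y), there exist q ≤ p and a continuous function f : [q] → (ℕ → Bool) with R(r, f(r)) for all r ≤ q. Then continuous uniformization also holds for Baire space targets: for every relation R̃ ⊆ X × (ℕ → ℕ) and every p ∈ X such that for all x ≤ p there exists y with R̃(x, y), there exist q ≤ p and a continuous function f : [q] → (ℕ → ℕ) with R̃(r, f(r)) for all r ≤ q. (Proposition 4.6 of the paper: LCU(P) implies LCU⁺(P); the proof uses only the topology and the preorder, via the run-length embedding of Baire space into Cantor space.) -/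
/-- Encode a Baire-space point as the characteristic function of its graph. -/
private def encB (y : ℕ → ℕ) : ℕ → Bool :=
  fun k => decide (y (Nat.unpair k).1 = (Nat.unpair k).2)

/-- The set of Cantor-space points that code at least one value at each coordinate. -/
private def SB : Set (ℕ → Bool) := {b | ∀ n, ∃ m, b (Nat.pair n m) = true}

private lemma encB_mem (y : ℕ → ℕ) : encB y ∈ SB := by
  intro n
  exact ⟨y n, by simp [encB, Nat.unpair_pair]⟩

/-- Decode on the valid set. -/
private noncomputable def decB (b : SB) (n : ℕ) : ℕ := Nat.find (b.2 n)

private lemma decB_encB (b : SB) (y : ℕ → ℕ) (h : b.1 = encB y) : decB b = y := by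
  funext n
  have key : ∀ m, b.1 (Nat.pair n m) = true ↔ m = y n := by
    simp [h, encB, Nat.unpair_pair, eq_comm]
  show Nat.find (b.2 n) = y n
  rw [Nat.find_eq_iff]
  constructor
  · exact (key _).mpr rfl
  · intro m hm hmt
    exact absurd ((key m).mp hmt) (by omega)

private lemma decB_continuous : Continuous (decB) := by
  apply continuous_pi
  intro n
  apply IsLocallyConstant.continuous
  rw [IsLocallyConstant.iff_exists_open]
  intro b
  set k := Nat.find (b.2 n) with hk
  refine ⟨Subtype.val ⁻¹' (⋂ m ∈ Finset.range (k + 1),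
      {c : ℕ → Bool | c (Nat.pair n m) = b.1 (Nat.pair n m)}), ?_, ?_, ?_⟩
  · apply IsOpen.preimage continuous_subtype_val
    apply isOpen_biInter_finset
    intro m _
    show IsOpen ((fun c : ℕ → Bool => c (Nat.pair n m)) ⁻¹' {b.1 (Nat.pair n m)})
    exact (continuous_apply (Nat.pair n m)).isOpen_preimage _ (isOpen_discrete _)
  · simp
  · intro b' hb'
    simp only [Set.mem_preimage, Set.mem_iInter, Finset.mem_range, Set.mem_setOf_eq] at hb'
    show Nat.find (b'.2 n) = Nat.find (b.2 n)
    rw [Nat.find_eq_iff]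
    constructor
    · rw [hb' k (by omega)]
      exact Nat.find_spec (b.2 n)
    · intro m hm
      rw [hb' m (by omega)]
      exact Nat.find_min (b.2 n) hm

/-- Proposition 4.6 (LCU implies LCU⁺): if, over a topological space `X` with a preorder,
every total relation into Cantor space can be continuously uniformized on a cube `[q]`
below any given `p`, then the same holds for relations into Baire space. -/
theorem stmt6 {X : Type*} [TopologicalSpace X] [Preorder X]
    (hLCU : ∀ (R : Set (X × (ℕ → Bool))) (p : X),
      (∀ x ≤ p, ∃ y : ℕ → Bool, (x, y) ∈ R) →
      ∃ q ≤ p, ∃ f : {x : X // x ≤ q} → (ℕ → Bool),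
        Continuous f ∧ ∀ r : {x : X // x ≤ q}, (r.1, f r) ∈ R) :
    ∀ (R : Set (X × (ℕ → ℕ))) (p : X),
      (∀ x ≤ p, ∃ y : ℕ → ℕ, (x, y) ∈ R) →
      ∃ q ≤ p, ∃ f : {x : X // x ≤ q} → (ℕ → ℕ),
        Continuous f ∧ ∀ r : {x : X // x ≤ q}, (r.1, f r) ∈ R := by
  intro R p hp
  obtain ⟨q, hq, f', hf'c, hf'⟩ :=
    hLCU {xb | ∃ y : ℕ → ℕ, (xb.1, y) ∈ R ∧ xb.2 = encB y} p
      (fun x hx => by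
        obtain ⟨y, hy⟩ := hp x hx
        exact ⟨encB y, y, hy, rfl⟩)
  have hmem : ∀ r : {x : X // x ≤ q}, f' r ∈ SB := by
    intro r
    obtain ⟨y, _, he⟩ := hf' r
    have he' : f' r = encB y := he
    rw [he']
    exact encB_mem y
  refine ⟨q, hq, fun r => decB ⟨f' r, hmem r⟩, ?_, ?_⟩
  · exact decB_continuous.comp (hf'c.subtype_mk hmem)
  · intro r
    obtain ⟨y, hy, he⟩ := hf' r
    have he' : f' r = encB y := he
    show (r.1, decB ⟨f' r, hmem r⟩) ∈ R
    rw [decB_encB ⟨f' r, hmem r⟩ y he']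
    exact hy
end

section
/- Let (X, X*, ⊑, ≤*) be an extended coarsened poset with Independent Sequencing over a type α. Then for every p ∈ X and all x, y ∈ X with x ⊑ p and y ⊑ p, there exists z ∈ X with z ⊑ p such that Left(z) ⊑ x, Left(Right(z)) ⊑ x, and Right(Right(z)) ⊑ y (hence Left(z) ≤* x, Left(Right(z)) ≤* x, and Right(Right(z)) ≤* y). In particular, clause 3 of the Left-Right Axiom holds. (Part of Lemma 5.2 of the paper: every extended coarsened poset with Independent Sequencing satisfies the Left-Right Axiom.) -/
/-- `b ⊑ a`: `b` is a pointwise-refinement of a subsequence of `a`. -/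
def sqsub {α : Type*} (b a : ℕ → Set α) : Prop :=
  ∃ i : ℕ → ℕ, StrictMono i ∧ ∀ n, b n ⊆ a (i n)

/-- `Left(a) = ⟨a(2n) : n ∈ ℕ⟩`. -/
def LeftSeq {α : Type*} (a : ℕ → Set α) : ℕ → Set α := fun n => a (2 * n)

/-- `Right(a) = ⟨a(2n+1) : n ∈ ℕ⟩`. -/
def RightSeq {α : Type*} (a : ℕ → Set α) : ℕ → Set α := fun n => a (2 * n + 1)

/-- `X*`: the collection of all subsequences of members of `X`. -/
def Xstar {α : Type*} (X : Set (ℕ → Set α)) : Set (ℕ → Set α) :=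
  {a | ∃ x ∈ X, ∃ i : ℕ → ℕ, StrictMono i ∧ ∀ n, a n = x (i n)}

/-- An extended coarsened poset with Independent Sequencing over `α`:
`X` is a set of sequences of nonempty countable subsets of `α`; `≤*` is a preorder on `X*`
such that tails refine: if some tail of `b` is `⊑ a` then `b ≤* a`; and `X` satisfies the
Independent Sequencing axiom. -/
structure ECPosetIS (α : Type*) where
  X : Set (ℕ → Set α)
  nonempty_countable : ∀ x ∈ X, ∀ n : ℕ, (x n).Nonempty ∧ (x n).Countable
  les : (ℕ → Set α) → (ℕ → Set α) → Prop
  les_refl : ∀ a ∈ Xstar X, les a a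
  les_trans : ∀ a ∈ Xstar X, ∀ b ∈ Xstar X, ∀ c ∈ Xstar X,
    les a b → les b c → les a c
  les_of_tail : ∀ a ∈ Xstar X, ∀ b ∈ Xstar X,
    (∃ m : ℕ, sqsub (fun n => b (n + m)) a) → les b a
  indep : ∀ x ∈ X, ∀ y ∈ X, ∀ P₀ P₁ P₂ : Set ℕ,
    P₀ ∪ P₁ ∪ P₂ = Set.univ → Disjoint P₀ P₁ → Disjoint P₀ P₂ → Disjoint P₁ P₂ →
    (P₀.Infinite ∨ P₁.Infinite) →
    ((∃ z ∈ X, ∃ i j : ℕ → ℕ, StrictMonoOn i P₀ ∧ StrictMonoOn j P₁ ∧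
        (∀ n ∈ P₀, z n ⊆ x (i n)) ∧ (∀ n ∈ P₁, z n ⊆ y (j n))) ∧
      ∀ p ∈ X, sqsub x p → sqsub y p →
        ∃ z ∈ X, sqsub z p ∧ ∃ i j : ℕ → ℕ, StrictMonoOn i P₀ ∧ StrictMonoOn j P₁ ∧
          (∀ n ∈ P₀, z n ⊆ x (i n)) ∧ (∀ n ∈ P₁, z n ⊆ y (j n)))

lemma mem_Xstar_of_mem {α : Type*} {X : Set (ℕ → Set α)} {x : ℕ → Set α} (hx : x ∈ X) :
    x ∈ Xstar X :=
  ⟨x, hx, id, strictMono_id, fun _ => rfl⟩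

lemma les_of_sqsub {α : Type*} (E : ECPosetIS α) {a b : ℕ → Set α}
    (ha : a ∈ Xstar E.X) (hb : b ∈ Xstar E.X) (h : sqsub b a) : E.les b a := by
  refine E.les_of_tail a ha b hb ⟨0, ?_⟩
  simpa using h

/-- Part of Lemma 5.2 (clause 3 of the Left-Right Axiom): in an extended coarsened poset
with Independent Sequencing, for every `p ∈ X` and all `x, y ∈ X` with `x ⊑ p` and
`y ⊑ p`, there is `z ∈ X` with `z ⊑ p` such that `Left(z) ⊑ x`,
`Left(Right(z)) ⊑ x`, and `Right(Right(z)) ⊑ y` (hence `Left(z) ≤* x`,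
`Left(Right(z)) ≤* x`, and `Right(Right(z)) ≤* y`). -/
theorem stmt8 {α : Type*} (E : ECPosetIS α) (p x y : ℕ → Set α)
    (hp : p ∈ E.X) (hx : x ∈ E.X) (hy : y ∈ E.X)
    (hxp : sqsub x p) (hyp : sqsub y p) :
    ∃ z ∈ E.X, sqsub z p ∧
      sqsub (LeftSeq z) x ∧ sqsub (LeftSeq (RightSeq z)) x ∧
      sqsub (RightSeq (RightSeq z)) y ∧
      E.les (LeftSeq z) x ∧ E.les (LeftSeq (RightSeq z)) x ∧
      E.les (RightSeq (RightSeq z)) y := by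
  set P₀ : Set ℕ := {n | n % 2 = 0 ∨ n % 4 = 1} with hP₀
  set P₁ : Set ℕ := {n | n % 4 = 3} with hP₁
  have hunion : P₀ ∪ P₁ ∪ (∅ : Set ℕ) = Set.univ := by
    ext n
    simp only [Set.mem_union, Set.mem_empty_iff_false, Set.mem_univ, iff_true, or_false,
      hP₀, hP₁, Set.mem_setOf_eq]
    omega
  have hd01 : Disjoint P₀ P₁ := by
    rw [Set.disjoint_left]; intro n h0 h1
    simp only [hP₀, hP₁, Set.mem_setOf_eq] at h0 h1; omega
  have hd02 : Disjoint P₀ (∅ : Set ℕ) := Set.disjoint_empty _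
  have hd12 : Disjoint P₁ (∅ : Set ℕ) := Set.disjoint_empty _
  have hinf : P₀.Infinite ∨ P₁.Infinite := by
    left
    apply Set.infinite_of_not_bddAbove
    rintro ⟨m, hm⟩
    have h1 : 2 * (m + 1) ∈ P₀ := by
      simp only [hP₀, Set.mem_setOf_eq]; omega
    have := hm h1
    omega
  obtain ⟨-, h2⟩ := E.indep x hx y hy P₀ P₁ ∅ hunion hd01 hd02 hd12 hinf
  obtain ⟨z, hz, hzp, i, j, hi, hj, hzx, hzy⟩ := h2 p hp hxp hyp
  have m0 : ∀ n : ℕ, 2 * n ∈ P₀ := fun n => by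
    simp only [hP₀, Set.mem_setOf_eq]; omega
  have m1 : ∀ n : ℕ, 2 * (2 * n) + 1 ∈ P₀ := fun n => by
    simp only [hP₀, Set.mem_setOf_eq]; omega
  have m3 : ∀ n : ℕ, 2 * (2 * n + 1) + 1 ∈ P₁ := fun n => by
    simp only [hP₁, Set.mem_setOf_eq]; omega
  have s1 : sqsub (LeftSeq z) x := by
    refine ⟨fun n => i (2 * n), fun a b hab => hi (m0 a) (m0 b) (by omega), fun n => ?_⟩
    exact hzx _ (m0 n)
  have s2 : sqsub (LeftSeq (RightSeq z)) x := by
    refine ⟨fun n => i (2 * (2 * n) + 1), fun a b hab => hi (m1 a) (m1 b) (by omega),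
      fun n => ?_⟩
    exact hzx _ (m1 n)
  have s3 : sqsub (RightSeq (RightSeq z)) y := by
    refine ⟨fun n => j (2 * (2 * n + 1) + 1), fun a b hab => hj (m3 a) (m3 b) (by omega),
      fun n => ?_⟩
    exact hzy _ (m3 n)
  have hxs : x ∈ Xstar E.X := mem_Xstar_of_mem hx
  have hys : y ∈ Xstar E.X := mem_Xstar_of_mem hy
  have hL : LeftSeq z ∈ Xstar E.X :=
    ⟨z, hz, fun n => 2 * n, fun a b hab => by dsimp only; omega, fun _ => rfl⟩
  have hLR : LeftSeq (RightSeq z) ∈ Xstar E.X :=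
    ⟨z, hz, fun n => 2 * (2 * n) + 1, fun a b hab => by dsimp only; omega, fun _ => rfl⟩
  have hRR : RightSeq (RightSeq z) ∈ Xstar E.X :=
    ⟨z, hz, fun n => 2 * (2 * n + 1) + 1, fun a b hab => by dsimp only; omega, fun _ => rfl⟩
  exact ⟨z, hz, hzp, s1, s2, s3,
    les_of_sqsub E hxs hL s1, les_of_sqsub E hxs hLR s2, les_of_sqsub E hys hRR s3⟩
end

section
/- Fix an integer k ≥ 1. The space FIN_k^[∞] with the maps Left and Right satisfies the Left-Right Axiom: (1) for every x ∈ FIN_k^[∞], Left(x) and Right(x) belong to FIN_k^[∞] and Left(x) ≤ x and Right(x) ≤ x; (2) for every x ∈ FIN_k^[∞] there are y, z ∈ FIN_k^[∞] with y ≤ x and z ≤ x such that Left(y) =* Right(z) and Right(y) =* Left(z); (3) for every p ∈ FIN_k^[∞] and all x, y ∈ FIN_k^[∞] with x ≤ p and y ≤ p, there exists z ∈ FIN_k^[∞] with z ≤ p such that Left(z) ≤ x, Left(Right(z)) ≤ x, and Right(Right(z)) ≤ y. (Lemma 5.1 of the paper, first part.) -/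
/-- The support of `f : ℕ → ℕ`. -/
def suppf (f : ℕ → ℕ) : Set ℕ := {n | f n ≠ 0}

/-- `FIN_k`: functions `f : ℕ → ℕ` with finite nonempty support, values `≤ k`, attaining `k`. -/
def FINk (k : ℕ) : Set (ℕ → ℕ) :=
  {f | (suppf f).Finite ∧ (suppf f).Nonempty ∧ (∀ n, f n ≤ k) ∧ ∃ n, f n = k}

/-- The tetris operation `T(f)(n) = max(f(n) − 1, 0)` (truncated subtraction on `ℕ`). -/
def tetris (f : ℕ → ℕ) : ℕ → ℕ := fun n => f n - 1

/-- `x` is an infinite block sequence of members of `FIN_k`. -/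
def IsBlockSeq (k : ℕ) (x : ℕ → ℕ → ℕ) : Prop :=
  (∀ n, x n ∈ FINk k) ∧
  ∀ n, ∀ i ∈ suppf (x n), ∀ j ∈ suppf (x (n + 1)), i < j

/-- `y ≤ x` in `FIN_k^[∞]`: each `yₙ` is a sum `Σ_{i∈s} T^{j(i)}(x_i)` over a finite
nonempty set `s`, where each `j(i) ≤ k` and `j(i) = 0` for at least one `i ∈ s`. -/
def leBlock (k : ℕ) (y x : ℕ → ℕ → ℕ) : Prop :=
  ∀ n, ∃ s : Finset ℕ, s.Nonempty ∧ ∃ j : ℕ → ℕ,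
    (∀ i ∈ s, j i ≤ k) ∧ (∃ i ∈ s, j i = 0) ∧
    ∀ m, y n m = ∑ i ∈ s, (tetris^[j i] (x i)) m

/-- `y ≤* x`: some tail of `y` is `≤ x`. -/
def leStarBlock (k : ℕ) (y x : ℕ → ℕ → ℕ) : Prop :=
  ∃ m : ℕ, leBlock k (fun n => y (n + m)) x

/-- `y =* x`. -/
def eqStarBlock (k : ℕ) (y x : ℕ → ℕ → ℕ) : Prop :=
  leStarBlock k y x ∧ leStarBlock k x y

/-- `Left(x) = ⟨x_{2n} : n⟩`. -/
def LeftBlock (x : ℕ → ℕ → ℕ) : ℕ → ℕ → ℕ := fun n => x (2 * n)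

/-- `Right(x) = ⟨x_{2n+1} : n⟩`. -/
def RightBlock (x : ℕ → ℕ → ℕ) : ℕ → ℕ → ℕ := fun n => x (2 * n + 1)

lemma le_of_comp (k : ℕ) (y x : ℕ → ℕ → ℕ) (g : ℕ → ℕ)
    (h : ∀ n, y n = x (g n)) : leBlock k y x := by
  intro n
  refine ⟨{g n}, Finset.singleton_nonempty _, fun _ => 0, by simp, ⟨g n, by simp⟩, ?_⟩
  intro m; simp [h n]

lemma supp_lt {k : ℕ} {x : ℕ → ℕ → ℕ} (hx : IsBlockSeq k x) :
    ∀ a b, a < b → ∀ i ∈ suppf (x a), ∀ j ∈ suppf (x b), i < j := by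
  intro a b hab
  induction b with
  | zero => omega
  | succ b ih =>
    intro i hi j hj
    rcases Nat.lt_succ_iff_lt_or_eq.mp hab with h | h
    · obtain ⟨t, ht⟩ := (hx.1 b).2.1
      exact (ih h i hi t ht).trans (hx.2 b t ht j hj)
    · subst h; exact hx.2 a i hi j hj

lemma blockSeq_comp {k : ℕ} {x : ℕ → ℕ → ℕ} (hx : IsBlockSeq k x) (g : ℕ → ℕ)
    (hg : ∀ n, g n < g (n + 1)) : IsBlockSeq k (fun n => x (g n)) :=
  ⟨fun n => hx.1 (g n), fun n i hi j hj => supp_lt hx _ _ (hg n) i hi j hj⟩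

lemma min_supp_ge {k : ℕ} {x : ℕ → ℕ → ℕ} (hx : IsBlockSeq k x) :
    ∀ n, ∀ i ∈ suppf (x n), n ≤ i := by
  intro n
  induction n with
  | zero => intro i _; exact Nat.zero_le i
  | succ n ih =>
    intro i hi
    obtain ⟨t, ht⟩ := (hx.1 n).2.1
    have h1 := hx.2 n t ht i hi
    have h2 := ih t ht
    omega

/-- Lemma 5.1, first part: `FIN_k^[∞]` with the maps `Left` and `Right` satisfies the
Left-Right Axiom. -/
theorem stmt9 (k : ℕ) (hk : 1 ≤ k) :
    (∀ x : ℕ → ℕ → ℕ, IsBlockSeq k x →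
      IsBlockSeq k (LeftBlock x) ∧ IsBlockSeq k (RightBlock x) ∧
      leBlock k (LeftBlock x) x ∧ leBlock k (RightBlock x) x) ∧
    (∀ x : ℕ → ℕ → ℕ, IsBlockSeq k x →
      ∃ y z : ℕ → ℕ → ℕ, IsBlockSeq k y ∧ IsBlockSeq k z ∧
        leBlock k y x ∧ leBlock k z x ∧
        eqStarBlock k (LeftBlock y) (RightBlock z) ∧
        eqStarBlock k (RightBlock y) (LeftBlock z)) ∧
    (∀ p x y : ℕ → ℕ → ℕ, IsBlockSeq k p → IsBlockSeq k x → IsBlockSeq k y →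
      leBlock k x p → leBlock k y p →
      ∃ z : ℕ → ℕ → ℕ, IsBlockSeq k z ∧ leBlock k z p ∧
        leBlock k (LeftBlock z) x ∧ leBlock k (LeftBlock (RightBlock z)) x ∧
        leBlock k (RightBlock (RightBlock z)) y) := by
  refine ⟨?_, ?_, ?_⟩
  · intro x hx
    exact ⟨blockSeq_comp hx (fun n => 2 * n) (fun n => by show 2 * n < 2 * (n + 1); omega),
           blockSeq_comp hx (fun n => 2 * n + 1) (fun n => by show 2 * n + 1 < 2 * (n + 1) + 1; omega),
           le_of_comp k _ x (fun n => 2 * n) (fun n => rfl),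
           le_of_comp k _ x (fun n => 2 * n + 1) (fun n => rfl)⟩
  · intro x hx
    refine ⟨x, fun n => x (n + 1), hx, blockSeq_comp hx (fun n => n + 1) (fun n => by show n + 1 < n + 1 + 1; omega),
      le_of_comp k x x id (fun n => rfl),
      le_of_comp k _ x (fun n => n + 1) (fun n => rfl),
      ⟨⟨1, le_of_comp k _ _ (fun n => n) (fun n => congrArg x (by ring))⟩,
       ⟨0, le_of_comp k _ _ (fun n => n + 1) (fun n => congrArg x (by ring))⟩⟩,
      ⟨⟨0, le_of_comp k _ _ id (fun n => rfl)⟩,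
       ⟨0, le_of_comp k _ _ id (fun n => rfl)⟩⟩⟩
  · intro p x y hp hx hy hxp hyp
    classical
    set src : ℕ → ℕ → ℕ → ℕ := fun m => if m % 4 = 3 then y else x with hsrcdef
    have hsrcBS : ∀ m, IsBlockSeq k (src m) := by
      intro m; simp only [hsrcdef]; split <;> assumption
    have hsrcle : ∀ m, leBlock k (src m) p := by
      intro m; simp only [hsrcdef]; split <;> assumption
    set a : ℕ → ℕ := fun m => Nat.rec 0 (fun m am => sSup (suppf (src m am)) + 1) m with hadef
    set z : ℕ → ℕ → ℕ := fun m => src m (a m) with hzdef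
    have ha : ∀ m, a (m + 1) = sSup (suppf (z m)) + 1 := fun m => rfl
    have hzFIN : ∀ m, z m ∈ FINk k := fun m => (hsrcBS m).1 (a m)
    have hzBS : IsBlockSeq k z := by
      refine ⟨hzFIN, ?_⟩
      intro m i hi j hj
      have h1 : i ≤ sSup (suppf (z m)) := le_csSup ((hzFIN m).1.bddAbove) hi
      have h2 : a (m + 1) ≤ j := min_supp_ge (hsrcBS (m + 1)) (a (m + 1)) j hj
      rw [ha m] at h2; omega
    refine ⟨z, hzBS, fun m => hsrcle m (a m), ?_, ?_, ?_⟩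
    · refine le_of_comp k _ x (fun n => a (2 * n)) ?_
      intro n
      show src (2 * n) (a (2 * n)) = x (a (2 * n))
      simp only [hsrcdef]; rw [if_neg (by omega)]
    · refine le_of_comp k _ x (fun n => a (2 * (2 * n) + 1)) ?_
      intro n
      show src (2 * (2 * n) + 1) (a (2 * (2 * n) + 1)) = x _
      simp only [hsrcdef]; rw [if_neg (by omega)]
    · refine le_of_comp k _ y (fun n => a (2 * (2 * n + 1) + 1)) ?_
      intro n
      show src (2 * (2 * n + 1) + 1) (a (2 * (2 * n + 1) + 1)) = y _
      simp only [hsrcdef]; rw [if_pos (by omega)]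
end

section
/- Fix an integer k ≥ 1. For every x ∈ FIN_k^[∞], the =*-equivalence class of x, namely {y ∈ FIN_k^[∞] : y =* x}, is countable. (Lemma 5.1 of the paper, second part.) -/
namespace Stmt10Aux

lemma tetris_iter (j : ℕ) (f : ℕ → ℕ) (m : ℕ) : (tetris^[j] f) m = f m - j := by
  induction j generalizing f with
  | zero => simp
  | succ j ih =>
      rw [Function.iterate_succ_apply, ih]
      simp [tetris, Nat.sub_sub, Nat.add_comm]

/-- strictly increasing supports, general indices -/
lemma supp_lt {k : ℕ} {x : ℕ → ℕ → ℕ} (hx : IsBlockSeq k x) :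
    ∀ {a b : ℕ}, a < b → ∀ p ∈ suppf (x a), ∀ q ∈ suppf (x b), p < q := by
  intro a b
  induction b with
  | zero => omega
  | succ b ih =>
      intro hab p hp q hq
      rcases Nat.lt_succ_iff_lt_or_eq.mp hab with h | h
      · obtain ⟨r, hr⟩ := (hx.1 b).2.1
        exact lt_trans (ih h p hp r hr) (hx.2 b r hr q hq)
      · subst h
        exact hx.2 a p hp q hq

lemma mem_supp_ge {k : ℕ} {x : ℕ → ℕ → ℕ} (hx : IsBlockSeq k x) :
    ∀ q p, p ∈ suppf (x q) → q ≤ p := by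
  intro q
  induction q with
  | zero => intro p _; exact Nat.zero_le p
  | succ q ih =>
      intro p hp
      obtain ⟨r, hr⟩ := (hx.1 q).2.1
      have := hx.2 q r hr p hp
      have := ih r hr
      omega

lemma x_inj {k : ℕ} {x : ℕ → ℕ → ℕ} (hx : IsBlockSeq k x) {a b : ℕ}
    (h : x a = x b) : a = b := by
  by_contra hne
  obtain ⟨p, hp⟩ := (hx.1 a).2.1
  have hp' : p ∈ suppf (x b) := by rw [← h]; exact hp
  rcases Nat.lt_or_ge a b with hab | hab
  · exact absurd (supp_lt hx hab p hp p hp') (lt_irrefl p)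
  · rcases Nat.lt_or_ge b a with hba | hba
    · exact absurd (supp_lt hx hba p hp' p hp) (lt_irrefl p)
    · omega

lemma bound_prefix (y : ℕ → ℕ → ℕ) (h : ∀ i, (suppf (y i)).Finite) (m : ℕ) :
    ∃ B, ∀ i < m, ∀ p ∈ suppf (y i), p < B := by
  induction m with
  | zero => exact ⟨0, by omega⟩
  | succ m ih =>
      obtain ⟨B, hB⟩ := ih
      refine ⟨max B ((h m).toFinset.sup id + 1), ?_⟩
      intro i hi p hp
      rcases Nat.lt_succ_iff_lt_or_eq.mp hi with h' | h'
      · exact lt_of_lt_of_le (hB i h' p hp) (le_max_left _ _)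
      · subst h'
        have : p ∈ (h i).toFinset := (h i).mem_toFinset.mpr hp
        have := Finset.le_sup (f := id) this
        have : p ≤ (h i).toFinset.sup id := this
        omega

/-- Core combinatorial lemma: if a tail of `y` is `≤ x` and a tail of `x` is `≤ y`,
then all far-enough terms of the `x`-tail are literally terms of `y`. -/
lemma core {k : ℕ} {x y : ℕ → ℕ → ℕ} (hx : IsBlockSeq k x) (hy : IsBlockSeq k y)
    {m m' : ℕ} (h1 : leBlock k (fun n => y (n + m)) x)
    (h2 : leBlock k (fun n => x (n + m')) y) :
    ∃ N, ∀ n, N ≤ n → ∃ i, m ≤ i ∧ x (n + m') = y i := by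
  obtain ⟨B, hB⟩ := bound_prefix y (fun i => (hy.1 i).1) m
  refine ⟨B, fun n hn => ?_⟩
  obtain ⟨t, -, c, -, ⟨i0, hi0t, hc0⟩, hsum0⟩ := h2 n
  have hsum : ∀ p, x (n + m') p = ∑ i ∈ t, (tetris^[c i] (y i)) p := hsum0
  -- y i0 ≤ x (n+m') pointwise
  have ineq1 : ∀ p, y i0 p ≤ x (n + m') p := by
    intro p
    have := Finset.single_le_sum (f := fun i => (tetris^[c i] (y i)) p)
      (fun i _ => Nat.zero_le _) hi0t
    rw [hsum p]
    simpa [hc0] using this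
  -- support of y i0 sits inside support of x (n+m'), hence is ≥ n+m' ≥ B
  have hsupp : ∀ p, y i0 p ≠ 0 → n + m' ≤ p := by
    intro p hp
    have h1' : x (n + m') p ≠ 0 := by
      have := ineq1 p; omega
    exact mem_supp_ge hx (n + m') p h1'
  -- i0 ≥ m
  have hi0m : m ≤ i0 := by
    by_contra h
    obtain ⟨p, hp⟩ := (hy.1 i0).2.1
    have := hB i0 (by omega) p hp
    have := hsupp p hp
    omega
  -- decompose y i0 via h1
  obtain ⟨s, -, j, -, ⟨l1, hl1s, hj0⟩, hsum20⟩ := h1 (i0 - m)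
  have hsum2 : ∀ p, y (i0 - m + m) p = ∑ l ∈ s, (tetris^[j l] (x l)) p := hsum20
  have hi0eq : i0 - m + m = i0 := Nat.sub_add_cancel hi0m
  rw [hi0eq] at hsum2
  have ineq2 : ∀ p, x l1 p ≤ y i0 p := by
    intro p
    have := Finset.single_le_sum (f := fun l => (tetris^[j l] (x l)) p)
      (fun l _ => Nat.zero_le _) hl1s
    rw [hsum2 p]
    simpa [hj0] using this
  -- l1 = n + m'
  obtain ⟨p0, hp0⟩ := (hx.1 l1).2.1
  have hy0 : y i0 p0 ≠ 0 := by have := ineq2 p0; simp only [suppf, Set.mem_setOf_eq] at hp0; omega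
  have hx0 : x (n + m') p0 ≠ 0 := by have := ineq1 p0; omega
  have hl1 : l1 = n + m' := by
    by_contra hne
    rcases Nat.lt_or_ge l1 (n + m') with hlt | hge
    · exact absurd (supp_lt hx hlt p0 hp0 p0 hx0) (lt_irrefl p0)
    · have : n + m' < l1 := by omega
      exact absurd (supp_lt hx this p0 hx0 p0 hp0) (lt_irrefl p0)
  -- now x (n+m') = y i0
  refine ⟨i0, hi0m, funext fun p => ?_⟩
  have := ineq2 p
  rw [hl1] at this
  exact le_antisymm (this) (ineq1 p)

/-- A strictly monotone `ℕ → ℕ` function with cofinite range. -/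
abbrev CofSM : Type := {l : ℕ → ℕ // StrictMono l ∧ (Set.range l)ᶜ.Finite}

instance : Countable CofSM := by
  have : Function.Injective (fun l : CofSM => l.2.2.toFinset) := by
    rintro ⟨l, hl, hfl⟩ ⟨l', hl', hfl'⟩ h
    simp only at h
    have hcc : (Set.range l)ᶜ = (Set.range l')ᶜ := by
      rw [← hfl.coe_toFinset, ← hfl'.coe_toFinset, h]
    have : Set.range l = Set.range l' := by
      have := congrArg compl hcc; simpa using this
    exact Subtype.ext ((hl.range_inj hl').mp this)
  exact this.countable

/-- finitely supported functions -/
abbrev FinSupp : Type := {f : ℕ → ℕ // (suppf f).Finite}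

instance : Countable FinSupp := by
  have : Function.Injective (fun f : FinSupp =>
      (⟨f.2.toFinset, f.1, fun a => by
        simp [Set.Finite.mem_toFinset, suppf]⟩ : ℕ →₀ ℕ)) := by
    rintro ⟨f, hf⟩ ⟨g, hg⟩ h
    apply Subtype.ext
    simpa using congrArg (fun F : ℕ →₀ ℕ => (F : ℕ → ℕ)) h
  exact this.countable

end Stmt10Aux

open Stmt10Aux in
/-- Lemma 5.1, second part: for each `x ∈ FIN_k^[∞]`, the `=*`-equivalence class of `x`
is countable. -/
theorem stmt10 (k : ℕ) (hk : 1 ≤ k) (x : ℕ → ℕ → ℕ) (hx : IsBlockSeq k x) :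
    {y : ℕ → ℕ → ℕ | IsBlockSeq k y ∧ eqStarBlock k y x}.Countable := by
  classical
  rw [← Set.countable_coe_iff]
  -- Key: each y in the class agrees, from some point M on, with a strictly monotone
  -- cofinite-range reindexing of x.
  have key : ∀ y ∈ {y : ℕ → ℕ → ℕ | IsBlockSeq k y ∧ eqStarBlock k y x},
      ∃ (M : ℕ) (l : CofSM), ∀ n, M ≤ n → y n = x (l.1 (n - M)) := by
    rintro y ⟨hy, ⟨m, h1⟩, ⟨m', h2⟩⟩
    -- tail of y consists of terms of x
    obtain ⟨N2, hN2⟩ := core hy hx h2 h1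
    -- tail of x consists of terms of y
    obtain ⟨N1, hN1⟩ := core hx hy h1 h2
    set M := N2 + m with hM
    have hyx : ∀ n, ∃ i, M ≤ n → y n = x i := by
      intro n
      by_cases hn : M ≤ n
      · obtain ⟨i, -, hi⟩ := hN2 (n - m) (by omega)
        have hi' : y (n - m + m) = x i := hi
        rw [show n - m + m = n by omega] at hi'
        exact ⟨i, fun _ => hi'⟩
      · exact ⟨0, fun h => absurd h hn⟩
    choose g hg using hyx
    -- strict monotonicity of j ↦ g (M + j)
    have hmono : StrictMono (fun j => g (M + j)) := by
      intro a b hab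
      obtain ⟨p, hp⟩ := (hy.1 (M + a)).2.1
      obtain ⟨q, hq⟩ := (hy.1 (M + b)).2.1
      have hpq : p < q := supp_lt hy (by omega) p hp q hq
      have ha : y (M + a) = x (g (M + a)) := hg (M + a) (by omega)
      have hb : y (M + b) = x (g (M + b)) := hg (M + b) (by omega)
      have hp' : p ∈ suppf (x (g (M + a))) := by rw [← ha]; exact hp
      have hq' : q ∈ suppf (x (g (M + b))) := by rw [← hb]; exact hq
      rcases Nat.lt_trichotomy (g (M + a)) (g (M + b)) with h | h | h
      · exact h
      · exfalso
        have : y (M + a) = y (M + b) := by rw [ha, hb, h]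
        have hp2 : p ∈ suppf (y (M + b)) := by rw [← this]; exact hp
        exact absurd (supp_lt hy (show M + a < M + b by omega) p hp p hp2) (lt_irrefl p)
      · exact absurd (supp_lt hx h q hq' p hp') (by omega)
    -- cofinite range
    obtain ⟨B2, hB2⟩ := bound_prefix y (fun i => (hy.1 i).1) M
    have hcof : (Set.range (fun j => g (M + j)))ᶜ.Finite := by
      apply Set.Finite.subset (Set.finite_lt_nat (N1 + m' + B2))
      intro q hq
      simp only [Set.mem_compl_iff, Set.mem_range] at hq
      simp only [Set.mem_setOf_eq]
      by_contra hK
      have hKq : N1 + m' + B2 ≤ q := by omega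
      obtain ⟨i, -, hi⟩ := hN1 (q - m') (by omega)
      have hi' : x (q - m' + m') = y i := hi
      have hiq : x q = y i := by rw [show q = q - m' + m' by omega]; exact hi'
      obtain ⟨p, hp⟩ := (hx.1 q).2.1
      have hpq : q ≤ p := mem_supp_ge hx q p hp
      have hpy : p ∈ suppf (y i) := by rw [← hiq]; exact hp
      have hiM : M ≤ i := by
        by_contra hi'
        have := hB2 i (by omega) p hpy
        omega
      have : y i = x (g i) := hg i hiM
      have hxq : x q = x (g i) := by rw [hiq, this]
      have : q = g i := x_inj hx hxq
      exact hq ⟨i - M, by rw [show M + (i - M) = i by omega]; exact this.symm⟩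
    refine ⟨M, ⟨fun j => g (M + j), hmono, hcof⟩, fun n hn => ?_⟩
    show y n = x (g (M + (n - M)))
    rw [show M + (n - M) = n by omega]
    exact hg n hn
  set S := {y : ℕ → ℕ → ℕ | IsBlockSeq k y ∧ eqStarBlock k y x} with hS
  choose M l hspec using fun z : ↥S => key z.1 z.2
  have hinj : Function.Injective (fun z : ↥S =>
      (M z, List.ofFn (fun i : Fin (M z) => (⟨z.1 i.1, (z.2.1.1 i.1).1⟩ : FinSupp)), l z)) := by
    rintro z z' h
    have hM : M z = M z' := congrArg Prod.fst h
    have hl : l z = l z' := congrArg (fun p => p.2.2) h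
    have hlist := congrArg (fun p => p.2.1) h
    simp only at hlist
    apply Subtype.ext
    funext n
    by_cases hn : n < M z
    · have h1 := congrArg (fun L : List FinSupp => L[n]?) hlist
      simp only [List.getElem?_ofFn, List.ofFnNthVal] at h1
      rw [dif_pos hn, dif_pos (hM ▸ hn)] at h1
      have h2 := Option.some_injective _ h1
      exact congrArg Subtype.val h2
    · have e1 := hspec z n (by omega)
      have e2 := hspec z' n (by rw [← hM]; omega)
      rw [e1, e2, hM, hl]
  exact hinj.countable
end

section
/- Let X* be a set equipped with a preorder ≤* (write a =* b for a ≤* b and b ≤* a), let X ⊆ X* carry a preorder ≤, and let Left, Right : X → X*. Suppose clause 2 of the Left-Right Axiom holds: for each x ∈ X there are y, z ∈ X with y ≤ x and z ≤ x such that Left(y) =* Right(z) and Right(y) =* Left(z). Let φ : X* → Ord be invariant: a =* b implies φ(a) = φ(b). Define the coloring c : X → {0, 1, 2} by: c(p) = 0 if φ(Left(p)) < φ(Right(p)); c(p) = 1 if φ(Left(p)) = φ(Right(p)); c(p) = 2 if φ(Left(p)) > φ(Right(p)). Then for every p₂ ∈ X such that c is constant on [p₂] = {q ∈ X : q ≤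 p₂}, the constant value is 1; that is, φ(Left(q)) = φ(Right(q)) for all q ≤ p₂. (This is the claim 'c(p₂) = 1' established in the proof of Theorem 1.3/3.4 of the paper.) -/
/-- The three-valued coloring `c` from the proof of Theorem 1.3/3.4:
`c(p) = 0` if `φ(Left(p)) < φ(Right(p))`, `c(p) = 1` if they are equal,
and `c(p) = 2` if `φ(Left(p)) > φ(Right(p))`. -/
noncomputable def color {Xs : Type*} (φ : Xs → Ordinal.{0}) (Left Right : Xs → Xs)
    (p : Xs) : Fin 3 :=
  if φ (Left p) < φ (Right p) then 0
  else if φ (Left p) = φ (Right p) then 1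
  else 2

/-- The claim `c(p₂) = 1` from the proof of Theorem 1.3/3.4: if `≤*` is a preorder on `X*`,
`X ⊆ X*` carries a preorder `≤`, `Left, Right : X → X*` satisfy clause 2 of the Left-Right
Axiom, and `φ : X* → Ord` is invariant, then whenever the coloring `c` is constant on the
cube `[p₂] = {q ∈ X : q ≤ p₂}`, its constant value is `1`; that is,
`φ(Left(q)) = φ(Right(q))` for all `q ∈ X` with `q ≤ p₂`. -/
theorem stmt13 {Xs : Type*} (les : Xs → Xs → Prop)
    (les_refl : ∀ a, les a a)
    (les_trans : ∀ a b c, les a b → les b c → les a c)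
    (X : Set Xs) (le : Xs → Xs → Prop)
    (le_refl : ∀ a ∈ X, le a a)
    (le_trans : ∀ a b c, a ∈ X → b ∈ X → c ∈ X → le a b → le b c → le a c)
    (Left Right : Xs → Xs)
    (hLRA2 : ∀ x ∈ X, ∃ y ∈ X, ∃ z ∈ X, le y x ∧ le z x ∧
      (les (Left y) (Right z) ∧ les (Right z) (Left y)) ∧
      (les (Right y) (Left z) ∧ les (Left z) (Right y)))
    (φ : Xs → Ordinal.{0})
    (hφ : ∀ a b : Xs, les a b → les b a → φ a = φ b)
    (p₂ : Xs) (hp₂ : p₂ ∈ X)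
    (hconst : ∀ q ∈ X, ∀ q' ∈ X, le q p₂ → le q' p₂ →
      color φ Left Right q = color φ Left Right q') :
    ∀ q ∈ X, le q p₂ → φ (Left q) = φ (Right q) := by
  intro q hq hqp
  obtain ⟨y, hy, z, hz, hyq, hzq, ⟨h1, h2⟩, ⟨h3, h4⟩⟩ := hLRA2 q hq
  have hyz1 : φ (Left y) = φ (Right z) := hφ _ _ h1 h2
  have hyz2 : φ (Right y) = φ (Left z) := hφ _ _ h4 h3 |>.symm
  have hyp : le y p₂ := le_trans y q p₂ hy hq hp₂ hyq hqp
  have hzp : le z p₂ := le_trans z q p₂ hz hq hp₂ hzq hqp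
  have hcyz := hconst y hy z hz hyp hzp
  have hcyq := hconst y hy q hq hyp hqp
  have hy1 : φ (Left y) = φ (Right y) := by
    rcases lt_trichotomy (φ (Left y)) (φ (Right y)) with h | h | h
    · exfalso
      have hz2 : φ (Right z) < φ (Left z) := by rw [← hyz1, ← hyz2]; exact h
      simp only [color, if_pos h, if_neg (not_lt.2 hz2.le), if_neg hz2.ne'] at hcyz
      exact absurd hcyz (by decide)
    · exact h
    · exfalso
      have hz2 : φ (Left z) < φ (Right z) := by rw [← hyz1, ← hyz2]; exact h
      simp only [color, if_neg (not_lt.2 h.le), if_neg h.ne', if_pos hz2] at hcyz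
      exact absurd hcyz (by decide)
  have : color φ Left Right q = 1 := by
    rw [← hcyq]; simp [color, hy1]
  by_contra hne
  simp only [color, if_neg (fun h : φ (Left q) < φ (Right q) => by
    simp [color, h] at this), if_neg hne] at this
  exact absurd this (by decide)
end
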